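/- arXiv:2201.06960 — 4 statements merged into one kernel-verified Lean document; each statement's English description precedes it below -/
import Mathlib

section
/- Over the confocal Poncelet triangle family, the mittenpunkt X₉ is stationary at the common center of the two ellipses: for every triangle inscribed in the outer ellipse with sides tangent to the confocal caustic, its mittenpunkt equals the origin. -/
set_option maxHeartbeats 1000000


/-- Euclidean distance in the plane `ℝ × ℝ`. -/
noncomputable def eucDist (P Q : ℝ × ℝ) : ℝ :=
  Real.sqrt ((P.1 - Q.1) ^ 2 + (P.2 - Q.2) ^ 2)

/-- The line through two points of the plane. -/
def lineThrough (P Q : ℝ × ℝ) : Set (ℝ × ℝ) :=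
  {z | ∃ u : ℝ, z = P + u • (Q - P)}

/-- Membership in the origin-centered axis-aligned ellipse with semi-axes `α, β`. -/
def onEllipse (α β : ℝ) (p : ℝ × ℝ) : Prop :=
  p.1 ^ 2 / α ^ 2 + p.2 ^ 2 / β ^ 2 = 1

/-- The line through `P` and `Q` is tangent to the ellipse with semi-axes `α, β`:
it meets it in exactly one point. -/
def TangentLine (P Q : ℝ × ℝ) (α β : ℝ) : Prop :=
  ∃! z : ℝ × ℝ, z ∈ lineThrough P Q ∧ onEllipse α β z

/-- The mittenpunkt `X₉`, with barycentric weights `sᵢ (s - sᵢ)` where `sᵢ` are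
the side lengths and `s` the semiperimeter. -/
noncomputable def mittenpunkt (P₁ P₂ P₃ : ℝ × ℝ) : ℝ × ℝ :=
  let s₁ := eucDist P₂ P₃; let s₂ := eucDist P₃ P₁; let s₃ := eucDist P₁ P₂
  let s := (s₁ + s₂ + s₃) / 2
  (s₁ * (s - s₁) + s₂ * (s - s₂) + s₃ * (s - s₃))⁻¹ •
    ((s₁ * (s - s₁)) • P₁ + (s₂ * (s - s₂)) • P₂ + (s₃ * (s - s₃)) • P₃)

private lemma tangent_alg (ac bc : ℝ) (hac : 0 < ac) (hbc : 0 < bc) (P Q : ℝ × ℝ)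
    (hPQ : P ≠ Q) (ht : TangentLine P Q ac bc) :
    ac ^ 2 * (Q.2 - P.2) ^ 2 + bc ^ 2 * (Q.1 - P.1) ^ 2
      = (P.1 * Q.2 - Q.1 * P.2) ^ 2 := by
  have hac' : (ac : ℝ) ≠ 0 := hac.ne'
  have hbc' : (bc : ℝ) ≠ 0 := hbc.ne'
  set dx := Q.1 - P.1 with hdx
  set dy := Q.2 - P.2 with hdy
  have hcoord : ∀ u : ℝ, P + u • (Q - P) = (P.1 + u * dx, P.2 + u * dy) := by
    intro u
    ext <;> simp [hdx, hdy, mul_comm]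
  set A := bc ^ 2 * dx ^ 2 + ac ^ 2 * dy ^ 2 with hA
  set B := 2 * (bc ^ 2 * P.1 * dx + ac ^ 2 * P.2 * dy) with hB
  set C := bc ^ 2 * P.1 ^ 2 + ac ^ 2 * P.2 ^ 2 - ac ^ 2 * bc ^ 2 with hC
  have hd : dx ≠ 0 ∨ dy ≠ 0 := by
    by_contra h
    push_neg at h
    apply hPQ
    have h1 : Q.1 = P.1 := by have := h.1; rw [hdx] at this; linarith [sub_eq_zero.mp this]
    have h2 : Q.2 = P.2 := by have := h.2; rw [hdy] at this; linarith [sub_eq_zero.mp this]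
    exact Prod.ext h1.symm h2.symm
  have hApos : 0 < A := by
    rcases hd with h | h
    · have h1 : 0 < (bc * dx) ^ 2 := pow_two_pos_of_ne_zero (mul_ne_zero hbc' h)
      nlinarith [sq_nonneg (ac * dy)]
    · have h1 : 0 < (ac * dy) ^ 2 := pow_two_pos_of_ne_zero (mul_ne_zero hac' h)
      nlinarith [sq_nonneg (bc * dx)]
  have hq : ∀ u : ℝ, onEllipse ac bc (P + u • (Q - P)) ↔ A * u ^ 2 + B * u + C = 0 := by
    intro u
    rw [hcoord]
    unfold onEllipse
    simp only
    rw [div_add_div _ _ (pow_ne_zero 2 hac') (pow_ne_zero 2 hbc'),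
      div_eq_one_iff_eq (mul_ne_zero (pow_ne_zero 2 hac') (pow_ne_zero 2 hbc'))]
    constructor <;> intro h <;> linear_combination h
  obtain ⟨z₀, ⟨⟨u₀, hz₀⟩, he₀⟩, huniq⟩ := ht
  have hroot : ∀ u : ℝ, A * u ^ 2 + B * u + C = 0 → u = u₀ := by
    intro u hu
    have hz : P + u • (Q - P) = z₀ := by
      apply huniq
      exact ⟨⟨u, rfl⟩, (hq u).mpr hu⟩
    rw [hz₀] at hz
    have h' : u • (Q - P) = u₀ • (Q - P) := add_left_cancel hz
    have h'' : (u - u₀) • (Q - P) = 0 := by rw [sub_smul, h', sub_self]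
    rcases smul_eq_zero.mp h'' with h | h
    · exact sub_eq_zero.mp h
    · exact absurd h (sub_ne_zero_of_ne (Ne.symm hPQ))
  have hu₀ : A * u₀ ^ 2 + B * u₀ + C = 0 := (hq u₀).mp (hz₀ ▸ he₀)
  have hu₀' : A * (u₀ * u₀) + B * u₀ + C = 0 := by linear_combination hu₀
  have hdisc : discrim A B C = (2 * A * u₀ + B) ^ 2 :=
    (quadratic_eq_zero_iff_discrim_eq_sq hApos.ne' u₀).mp hu₀'
  have he : 2 * A * u₀ + B = 0 := by
    by_contra he
    have hroot2 : A * ((u₀ - (2 * A * u₀ + B) / A) * (u₀ - (2 * A * u₀ + B) / A))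
        + B * (u₀ - (2 * A * u₀ + B) / A) + C = 0 := by
      rw [quadratic_eq_zero_iff_discrim_eq_sq hApos.ne', hdisc]
      field_simp
      ring
    have hroot2' : A * (u₀ - (2 * A * u₀ + B) / A) ^ 2 + B * (u₀ - (2 * A * u₀ + B) / A) + C = 0 := by
      linear_combination hroot2
    have := hroot _ hroot2'
    have : (2 * A * u₀ + B) / A = 0 := by linarith
    exact he ((div_eq_zero_iff.mp this).resolve_right hApos.ne')
  have hd0 : B ^ 2 - 4 * A * C = 0 := by
    have : discrim A B C = 0 := by rw [hdisc, he]; ring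
    rw [discrim] at this
    linarith
  apply mul_left_cancel₀ (show (ac ^ 2 * bc ^ 2 : ℝ) ≠ 0 from
    mul_ne_zero (pow_ne_zero 2 hac') (pow_ne_zero 2 hbc'))
  linear_combination (1 / 4) * hd0

private lemma ell3x (a b x1 y1 x2 y2 x3 y3 : ℝ)
    (e1 : b^2*x1^2 + a^2*y1^2 = a^2*b^2)
    (e2 : b^2*x2^2 + a^2*y2^2 = a^2*b^2)
    (e3 : b^2*x3^2 + a^2*y3^2 = a^2*b^2) :
    (a^2*b^2 - b^2*x2*x3 - a^2*y2*y3) * ((a^2*b^2 - b^2*x3*x1 - a^2*y3*y1) + (a^2*b^2 - b^2*x1*x2 - a^2*y1*y2) - (a^2*b^2 - b^2*x2*x3 - a^2*y2*y3)) * x1 + (a^2*b^2 - b^2*x3*x1 - a^2*y3*y1) * ((a^2*b^2 - b^2*x1*x2 - a^2*y1*y2) + (a^2*b^2 - b^2*x2*x3 - a^2*y2*y3) - (a^2*b^2 - b^2*x3*x1 - a^2*y3*y1)) * x2 + (a^2*b^2 - b^2*x1*x2 - a^2*y1*y2) * ((a^2*b^2 - b^2*x2*x3 - a^2*y2*y3)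 + (a^2*b^2 - b^2*x3*x1 - a^2*y3*y1) - (a^2*b^2 - b^2*x1*x2 - a^2*y1*y2)) * x3 = 0 := by
  linear_combination (-x3*a^2*b^2 + y2*x3*y3*a^2 - x2*a^2*b^2 + x2*x3^2*b^2 + x2*y2*y3*a^2 + x2^2*x3*b^2) * e1 + (y1*x3*y3*a^2 - y1^2*x3*a^2 - x1*a^2*b^2 + x1*x3^2*b^2 + x1*y1*y3*a^2) * e2 + (y1*x2*y2*a^2 - y1^2*x2*a^2 - x1*y2^2*a^2 + x1*y1*y2*a^2) * e3

lemma ell3y (a b x1 y1 x2 y2 x3 y3 : ℝ)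
    (e1 : b^2*x1^2 + a^2*y1^2 = a^2*b^2)
    (e2 : b^2*x2^2 + a^2*y2^2 = a^2*b^2)
    (e3 : b^2*x3^2 + a^2*y3^2 = a^2*b^2) :
    (a^2*b^2 - b^2*x2*x3 - a^2*y2*y3) * ((a^2*b^2 - b^2*x3*x1 - a^2*y3*y1) + (a^2*b^2 - b^2*x1*x2 - a^2*y1*y2) - (a^2*b^2 - b^2*x2*x3 - a^2*y2*y3)) * y1 + (a^2*b^2 - b^2*x3*x1 - a^2*y3*y1) * ((a^2*b^2 - b^2*x1*x2 - a^2*y1*y2) + (a^2*b^2 - b^2*x2*x3 - a^2*y2*y3) - (a^2*b^2 - b^2*x3*x1 - a^2*y3*y1)) * y2 + (a^2*b^2 - b^2*x1*x2 - a^2*y1*y2) * ((a^2*b^2 - b^2*x2*x3 - a^2*y2*y3) + (a^2*b^2 - b^2*x3*x1 - a^2*y3*y1) - (a^2*b^2 - b^2*x1*x2 - a^2*y1*y2)) * y3 = 0 := by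
  linear_combination (-y2*x3^2*b^2 + x2*x3*y3*b^2 + x2*y2*x3*b^2 - x2^2*y3*b^2) * e1 + (-y3*a^2*b^2 - y1*x3^2*b^2 + y1^2*y3*a^2 + x1*x3*y3*b^2 + x1*y1*x3*b^2) * e2 + (-y2*a^2*b^2 - y1*a^2*b^2 + y1*y2^2*a^2 + y1^2*y2*a^2 + x1*x2*y2*b^2 + x1*y1*x2*b^2) * e3

lemma chord_sq (a b ac bc x1 y1 x2 y2 : ℝ)
    (e1 : b^2*x1^2 + a^2*y1^2 = a^2*b^2)
    (e2 : b^2*x2^2 + a^2*y2^2 = a^2*b^2)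
    (hconf : ac^2 - bc^2 = a^2 - b^2)
    (T : ac^2*(y2-y1)^2 + bc^2*(x2-x1)^2 = (x1*y2-x2*y1)^2) :
    (a^2*b^2 - b^2*x1*x2 - a^2*y1*y2)^2
      = a^2*b^2*(a^2-ac^2)*((x2-x1)^2+(y2-y1)^2) := by
  linear_combination (b^2*x2^2 + a^2*y2^2 - a^2*b^2) * e1 + (a^2*b^2) * T
    + (a^2*b^2*(x2-x1)^2) * hconf

private lemma Kpos (a b x1 y1 x2 y2 : ℝ) (ha : 0 < a) (hb : 0 < b)
    (hne : (x1, y1) ≠ (x2, y2))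
    (e1 : b^2*x1^2 + a^2*y1^2 = a^2*b^2)
    (e2 : b^2*x2^2 + a^2*y2^2 = a^2*b^2) :
    0 < a^2*b^2 - b^2*x1*x2 - a^2*y1*y2 := by
  have hKeq : a^2*b^2 - b^2*x1*x2 - a^2*y1*y2
      = ((b*(x2-x1))^2 + (a*(y2-y1))^2)/2 := by
    linear_combination (-1/2) * e1 + (-1/2) * e2
  have hd : x1 ≠ x2 ∨ y1 ≠ y2 := by
    by_contra h
    push_neg at h
    exact hne (by rw [h.1, h.2])
  rw [hKeq]
  rcases hd with h | h
  · have h1 : 0 < (b*(x2-x1))^2 :=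
      pow_two_pos_of_ne_zero (mul_ne_zero hb.ne' (sub_ne_zero_of_ne (Ne.symm h)))
    nlinarith [sq_nonneg (a*(y2-y1))]
  · have h1 : 0 < (a*(y2-y1))^2 :=
      pow_two_pos_of_ne_zero (mul_ne_zero ha.ne' (sub_ne_zero_of_ne (Ne.symm h)))
    nlinarith [sq_nonneg (b*(x2-x1))]

private lemma Spos (x1 y1 x2 y2 : ℝ) (hne : (x1, y1) ≠ (x2, y2)) :
    0 < (x2-x1)^2 + (y2-y1)^2 := by
  have hd : x1 ≠ x2 ∨ y1 ≠ y2 := by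
    by_contra h
    push_neg at h
    exact hne (by rw [h.1, h.2])
  rcases hd with h | h
  · have h1 : 0 < (x2-x1)^2 := pow_two_pos_of_ne_zero (sub_ne_zero_of_ne (Ne.symm h))
    nlinarith [sq_nonneg (y2-y1)]
  · have h1 : 0 < (y2-y1)^2 := pow_two_pos_of_ne_zero (sub_ne_zero_of_ne (Ne.symm h))
    nlinarith [sq_nonneg (x2-x1)]

private lemma dist_eq_aux (a b ac x1 y1 x2 y2 : ℝ) (ha : 0 < a) (hb : 0 < b)
    (hmu : 0 < a^2 - ac^2) (hne : (x1, y1) ≠ (x2, y2))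
    (e1 : b^2*x1^2 + a^2*y1^2 = a^2*b^2)
    (e2 : b^2*x2^2 + a^2*y2^2 = a^2*b^2)
    (hchord : (a^2*b^2 - b^2*x1*x2 - a^2*y1*y2)^2
      = a^2*b^2*(a^2-ac^2)*((x2-x1)^2+(y2-y1)^2)) :
    eucDist (x1, y1) (x2, y2)
      = (a^2*b^2 - b^2*x1*x2 - a^2*y1*y2) / (a*b*Real.sqrt (a^2-ac^2)) := by
  have hK := Kpos a b x1 y1 x2 y2 ha hb hne e1 e2
  have hs : 0 < Real.sqrt (a^2-ac^2) := Real.sqrt_pos.mpr hmu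
  have hnu : 0 < a*b*Real.sqrt (a^2-ac^2) := by positivity
  have hnu2 : (a*b*Real.sqrt (a^2-ac^2))^2 = a^2*b^2*(a^2-ac^2) := by
    rw [mul_pow, mul_pow, Real.sq_sqrt hmu.le]
  unfold eucDist
  have h1 : (x1-x2)^2 + (y1-y2)^2
      = ((a^2*b^2 - b^2*x1*x2 - a^2*y1*y2) / (a*b*Real.sqrt (a^2-ac^2)))^2 := by
    rw [div_pow, eq_div_iff (pow_ne_zero 2 hnu.ne'), hnu2]
    linear_combination -hchord
  simp only
  rw [h1, Real.sqrt_sq (le_of_lt (div_pos hK hnu))]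

/-- Over the confocal Poncelet family, the mittenpunkt `X₉` is stationary at the
common center of the two ellipses. -/
theorem confocal_mittenpunkt_stationary
    (a b : ℝ) (hab : b < a) (hb : 0 < b) :
    ∀ a_c b_c : ℝ, 0 < b_c → b_c < a_c → a_c ^ 2 - b_c ^ 2 = a ^ 2 - b ^ 2 →
    ∀ P₁ P₂ P₃ : ℝ × ℝ,
      onEllipse a b P₁ → onEllipse a b P₂ → onEllipse a b P₃ →
      ¬ Collinear ℝ ({P₁, P₂, P₃} : Set (ℝ × ℝ)) →
      TangentLine P₁ P₂ a_c b_c → TangentLine P₂ P₃ a_c b_c →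
      TangentLine P₃ P₁ a_c b_c →
      mittenpunkt P₁ P₂ P₃ = (0, 0) := by
  intro ac bc hbc hbcac hconf P₁ P₂ P₃ h₁ h₂ h₃ hncol t₁₂ t₂₃ t₃₁
  have ha : 0 < a := lt_trans hb hab
  have hac : 0 < ac := lt_trans hbc hbcac
  -- pairwise distinct
  have h12 : P₁ ≠ P₂ := by
    rintro rfl
    apply hncol
    rw [Set.insert_idem]
    exact collinear_pair ℝ P₁ P₃
  have h23 : P₂ ≠ P₃ := by
    intro h
    apply hncol
    have : ({P₁, P₂, P₃} : Set (ℝ × ℝ)) = {P₁, P₂} := by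
      rw [← h]
      ext z
      simp only [Set.mem_insert_iff, Set.mem_singleton_iff]
      tauto
    rw [this]
    exact collinear_pair ℝ P₁ P₂
  have h31 : P₃ ≠ P₁ := by
    intro h
    apply hncol
    have : ({P₁, P₂, P₃} : Set (ℝ × ℝ)) = {P₁, P₂} := by
      rw [h]
      ext z
      simp only [Set.mem_insert_iff, Set.mem_singleton_iff]
      tauto
    rw [this]
    exact collinear_pair ℝ P₁ P₂
  -- tangency algebraic conditions
  have T₁₂ := tangent_alg ac bc hac hbc P₁ P₂ h12 t₁₂
  have T₂₃ := tangent_alg ac bc hac hbc P₂ P₃ h23 t₂₃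
  have T₃₁ := tangent_alg ac bc hac hbc P₃ P₁ h31 t₃₁
  obtain ⟨x₁, y₁⟩ := P₁
  obtain ⟨x₂, y₂⟩ := P₂
  obtain ⟨x₃, y₃⟩ := P₃
  simp only at T₁₂ T₂₃ T₃₁
  -- ellipse equations cleared
  have ha' : a ≠ 0 := ha.ne'
  have hb' : b ≠ 0 := hb.ne'
  unfold onEllipse at h₁ h₂ h₃
  simp only at h₁ h₂ h₃
  have e1 : b^2*x₁^2 + a^2*y₁^2 = a^2*b^2 := by
    field_simp at h₁
    linear_combination h₁
  have e2 : b^2*x₂^2 + a^2*y₂^2 = a^2*b^2 := by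
    field_simp at h₂
    linear_combination h₂
  have e3 : b^2*x₃^2 + a^2*y₃^2 = a^2*b^2 := by
    field_simp at h₃
    linear_combination h₃
  -- chord relations
  have C₁₂ := chord_sq a b ac bc x₁ y₁ x₂ y₂ e1 e2 hconf T₁₂
  have C₂₃ := chord_sq a b ac bc x₂ y₂ x₃ y₃ e2 e3 hconf T₂₃
  have C₃₁ := chord_sq a b ac bc x₃ y₃ x₁ y₁ e3 e1 hconf T₃₁
  -- positivity of a^2 - ac^2
  have hK12 := Kpos a b x₁ y₁ x₂ y₂ ha hb h12 e1 e2
  have hK23 := Kpos a b x₂ y₂ x₃ y₃ ha hb h23 e2 e3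
  have hK31 := Kpos a b x₃ y₃ x₁ y₁ ha hb h31 e3 e1
  have hS12 := Spos x₁ y₁ x₂ y₂ h12
  have hSb : 0 < a^2*b^2*((x₂-x₁)^2+(y₂-y₁)^2) := by positivity
  have hmu : 0 < a^2 - ac^2 := by
    have hpos : 0 < (a^2-ac^2) * (a^2*b^2*((x₂-x₁)^2+(y₂-y₁)^2)) := by
      have heq : (a^2-ac^2) * (a^2*b^2*((x₂-x₁)^2+(y₂-y₁)^2))
          = (a^2*b^2 - b^2*x₁*x₂ - a^2*y₁*y₂)^2 := by linear_combination -C₁₂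
      rw [heq]
      exact pow_two_pos_of_ne_zero hK12.ne'
    rcases mul_pos_iff.mp hpos with ⟨hh1, _⟩ | ⟨_, hh2⟩
    · exact hh1
    · linarith
  -- the three side lengths
  have hd₃ := dist_eq_aux a b ac x₁ y₁ x₂ y₂ ha hb hmu h12 e1 e2 C₁₂
  have hd₁ := dist_eq_aux a b ac x₂ y₂ x₃ y₃ ha hb hmu h23 e2 e3 C₂₃
  have hd₂ := dist_eq_aux a b ac x₃ y₃ x₁ y₁ ha hb hmu h31 e3 e1 C₃₁
  set ν := a*b*Real.sqrt (a^2-ac^2) with hν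
  have hνpos : 0 < ν := by
    have := Real.sqrt_pos.mpr hmu
    positivity
  have hν' : ν ≠ 0 := hνpos.ne'
  set K₁ := a^2*b^2 - b^2*x₂*x₃ - a^2*y₂*y₃ with hK₁
  set K₂ := a^2*b^2 - b^2*x₃*x₁ - a^2*y₃*y₁ with hK₂
  set K₃ := a^2*b^2 - b^2*x₁*x₂ - a^2*y₁*y₂ with hK₃
  have hx := ell3x a b x₁ y₁ x₂ y₂ x₃ y₃ e1 e2 e3
  have hy := ell3y a b x₁ y₁ x₂ y₂ x₃ y₃ e1 e2 e3
  simp only [mittenpunkt]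
  rw [hd₁, hd₂, hd₃]
  have hsum :
      (K₁/ν * ((K₁/ν + K₂/ν + K₃/ν)/2 - K₁/ν)) • ((x₁ : ℝ), (y₁ : ℝ))
        + (K₂/ν * ((K₁/ν + K₂/ν + K₃/ν)/2 - K₂/ν)) • ((x₂ : ℝ), (y₂ : ℝ))
        + (K₃/ν * ((K₁/ν + K₂/ν + K₃/ν)/2 - K₃/ν)) • ((x₃ : ℝ), (y₃ : ℝ))
      = ((0 : ℝ), (0 : ℝ)) := by
    simp only [Prod.smul_mk, Prod.mk_add_mk, smul_eq_mul, Prod.mk.injEq]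
    constructor
    · linear_combination (1/(2*ν^2)) * hx
    · linear_combination (1/(2*ν^2)) * hy
  rw [hsum]
  simp
end

section
/- For the homothetic family P_i(t) = (a cos(t + 2πi/3), b sin(t + 2πi/3)), i = 0,1,2, each side of the triangle is tangent to the concentric ellipse x²/(a/2)² + y²/(b/2)² = 1. -/
open Real

lemma c23 : Real.cos (2 * π / 3) = -(1/2) := by
  have : (2 : ℝ) * π / 3 = π - π/3 := by ring
  rw [this, Real.cos_pi_sub, Real.cos_pi_div_three]

lemma c43 : Real.cos (4 * π / 3) = -(1/2) := by
  have : (4 : ℝ) * π / 3 = π + π/3 := by ring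
  rw [this, Real.cos_add, Real.cos_pi, Real.sin_pi, Real.cos_pi_div_three]; ring

lemma key (t k1 k2 : ℝ) (h : Real.cos (k2 - k1) = -(1/2)) :
    Real.cos (t + k1) * Real.cos (t + k2) + Real.sin (t + k1) * Real.sin (t + k2)
      = -(1/2) := by
  rw [← Real.cos_sub]
  have e : (t + k1) - (t + k2) = -(k2 - k1) := by ring
  rw [e, Real.cos_neg, h]

lemma core (a b c1 c2 : ℝ) (ha : 0 < a) (hb : 0 < b)
    (h : Real.cos c1 * Real.cos c2 + Real.sin c1 * Real.sin c2 = -(1/2)) :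
    ∃! z : ℝ × ℝ, z ∈ lineThrough (a * Real.cos c1, b * Real.sin c1)
        (a * Real.cos c2, b * Real.sin c2) ∧
      z.1 ^ 2 / (a / 2) ^ 2 + z.2 ^ 2 / (b / 2) ^ 2 = 1 := by
  have ha' := ha.ne'
  have hb' := hb.ne'
  have p1 := Real.sin_sq_add_cos_sq c1
  have p2 := Real.sin_sq_add_cos_sq c2
  refine ⟨((a * Real.cos c1 + a * Real.cos c2)/2, (b * Real.sin c1 + b * Real.sin c2)/2),
    ⟨⟨1/2, ?_⟩, ?_⟩, ?_⟩
  · simp only [lineThrough, Prod.mk_add_mk, Prod.smul_mk, Prod.mk_sub_mk, smul_eq_mul,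
      Prod.mk.injEq]
    constructor <;> ring
  · have e1 : ((a * Real.cos c1 + a * Real.cos c2)/2) ^ 2 / (a/2) ^ 2
        = (Real.cos c1 + Real.cos c2) ^ 2 := by
      field_simp
    have e2 : ((b * Real.sin c1 + b * Real.sin c2)/2) ^ 2 / (b/2) ^ 2
        = (Real.sin c1 + Real.sin c2) ^ 2 := by
      field_simp
    simp only [e1, e2]
    linear_combination p1 + p2 + 2 * h
  · rintro z ⟨⟨u, rfl⟩, hz⟩
    simp only [Prod.mk_sub_mk, Prod.smul_mk, smul_eq_mul, Prod.mk_add_mk] at hz ⊢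
    set X := Real.cos c1 + u * (Real.cos c2 - Real.cos c1) with hX
    set Y := Real.sin c1 + u * (Real.sin c2 - Real.sin c1) with hY
    have hz1 : a * Real.cos c1 + u * (a * Real.cos c2 - a * Real.cos c1) = a * X := by
      rw [hX]; ring
    have hz2 : b * Real.sin c1 + u * (b * Real.sin c2 - b * Real.sin c1) = b * Y := by
      rw [hY]; ring
    rw [hz1, hz2] at hz
    have e1 : (a * X) ^ 2 / (a/2) ^ 2 = 4 * X ^ 2 := by field_simp; ring
    have e2 : (b * Y) ^ 2 / (b/2) ^ 2 = 4 * Y ^ 2 := by field_simp; ring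
    rw [e1, e2] at hz
    have hXY : X ^ 2 + Y ^ 2 = 1 - 3*u + 3*u^2 := by
      rw [hX, hY]
      linear_combination (1-u)^2 * p1 + u^2 * p2 + (2*u*(1-u)) * h
    have hu : u = 1/2 := by nlinarith [sq_nonneg (2*u - 1)]
    subst hu
    simp only [Prod.mk.injEq]
    constructor <;> ring

/-- For the homothetic family `Pᵢ(t) = (a cos(t + 2πi/3), b sin(t + 2πi/3))`,
each side of the triangle is tangent to the concentric ellipse
`x²/(a/2)² + y²/(b/2)² = 1`, i.e. meets it in exactly one point. -/
theorem homothetic_sides_tangent_to_half_ellipse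
    (a b t : ℝ) (ha : 0 < a) (hb : 0 < b) :
    let P : Fin 3 → ℝ × ℝ := fun i =>
      (a * cos (t + 2 * π * (i : ℕ) / 3), b * sin (t + 2 * π * (i : ℕ) / 3))
    ∀ i j : Fin 3, i ≠ j →
      ∃! z : ℝ × ℝ, z ∈ lineThrough (P i) (P j) ∧
        z.1 ^ 2 / (a / 2) ^ 2 + z.2 ^ 2 / (b / 2) ^ 2 = 1 := by
  intro P i j hij
  have base : ∀ ki kj : ℝ, Real.cos (kj - ki) = -(1/2) →
      ∃! z : ℝ × ℝ, z ∈ lineThrough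
          (a * Real.cos (t + ki), b * Real.sin (t + ki))
          (a * Real.cos (t + kj), b * Real.sin (t + kj)) ∧
        z.1 ^ 2 / (a / 2) ^ 2 + z.2 ^ 2 / (b / 2) ^ 2 = 1 := by
    intro ki kj h
    exact core a b _ _ ha hb (key t ki kj h)
  have h23 := c23
  have h43 := c43
  fin_cases i <;> fin_cases j <;>
    first
    | exact (hij rfl).elim
    | · refine base _ _ ?_
        first
        | (convert h23 using 2; push_cast; ring1)
        | (convert h43 using 2; push_cast; ring1)
        | (rw [← Real.cos_neg]
           first
           | (convert h23 using 2; push_cast; ring1)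
           | (convert h43 using 2; push_cast; ring1))
end

section
/- Over triangles inscribed in an ellipse x²/a² + y²/b² = 1 with a fixed barycenter at the origin (equivalently, the homothetic family), the orthocenter sweeps an ellipse: the orthocenter of the triangle with vertices (a cos θ_i, b sin θ_i), θ_i = t + 2πi/3, lies on a concentric axis-aligned ellipse with semi-axes proportional to |a² - b²|/a and |a² - b²|/b as t varies, when a ≠ b. -/
open Real

/-- Planar dot product. -/
def dot (v w : ℝ × ℝ) : ℝ := v.1 * w.1 + v.2 * w.2

/-- Over the homothetic family `Pᵢ = (a cos(t + 2πi/3), b sin(t + 2πi/3))`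
(triangles inscribed in `x²/a² + y²/b² = 1` with barycenter at the origin),
the orthocenter sweeps a concentric axis-aligned ellipse with semi-axes
proportional to `(a² - b²)/a` and `(a² - b²)/b`, when `a > b`. -/
theorem homothetic_orthocenter_locus_is_ellipse (a b : ℝ) (hab : b < a) (hb : 0 < b) :
    ∃ ρ : ℝ, 0 < ρ ∧
      ∀ t : ℝ,
        let P : Fin 3 → ℝ × ℝ := fun i =>
          (a * cos (t + 2 * π * (i : ℕ) / 3), b * sin (t + 2 * π * (i : ℕ) / 3))
        ∀ H : ℝ × ℝ,
          dot (H - P 0) (P 2 - P 1) = 0 →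
          dot (H - P 1) (P 0 - P 2) = 0 →
          dot (H - P 2) (P 1 - P 0) = 0 →
          H.1 ^ 2 / (ρ * (a ^ 2 - b ^ 2) / a) ^ 2
            + H.2 ^ 2 / (ρ * (a ^ 2 - b ^ 2) / b) ^ 2 = 1 := by
  refine ⟨1/2, by norm_num, ?_⟩
  intro t P H h0 h1 h2
  have ha : (0:ℝ) < a := lt_trans hb hab
  have hk : (0:ℝ) < a^2 - b^2 := by nlinarith
  have hr3 : Real.sqrt 3 ^ 2 = 3 := Real.sq_sqrt (by norm_num)
  have hsc : sin t ^ 2 + cos t ^ 2 = 1 := sin_sq_add_cos_sq t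
  have e1 : (2 * π * (1:ℕ) / 3 : ℝ) = π - π/3 := by push_cast; ring
  have e2 : (2 * π * (2:ℕ) / 3 : ℝ) = π + π/3 := by push_cast; ring
  have hc1 : cos (t + 2 * π * (1:ℕ) / 3) = (-cos t - Real.sqrt 3 * sin t)/2 := by
    rw [e1, cos_add, cos_pi_sub, sin_pi_sub, cos_pi_div_three, sin_pi_div_three]; ring
  have hs1 : sin (t + 2 * π * (1:ℕ) / 3) = (-sin t + Real.sqrt 3 * cos t)/2 := by
    rw [e1, sin_add, cos_pi_sub, sin_pi_sub, cos_pi_div_three, sin_pi_div_three]; ring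
  have hc2 : cos (t + 2 * π * (2:ℕ) / 3) = (-cos t + Real.sqrt 3 * sin t)/2 := by
    rw [e2]
    simp [cos_add, sin_add, Real.cos_pi, Real.sin_pi, cos_pi_div_three, sin_pi_div_three]
    ring
  have hs2 : sin (t + 2 * π * (2:ℕ) / 3) = (-sin t - Real.sqrt 3 * cos t)/2 := by
    rw [e2]
    simp [cos_add, sin_add, Real.cos_pi, Real.sin_pi, cos_pi_div_three, sin_pi_div_three]
    ring
  have e0 : (t + 2 * π * (0:ℕ) / 3 : ℝ) = t := by push_cast; ring
  simp only [P, dot, Prod.fst_sub, Prod.snd_sub, Fin.isValue, Fin.val_zero, Fin.val_one,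
    Fin.val_two, e0, hc1, hs1, hc2, hs2] at h0 h1
  set s := sin t
  set c := cos t
  set r := Real.sqrt 3 with hr
  set k := a^2 - b^2 with hkdef
  have hrpos : (0:ℝ) < r := by rw [hr]; positivity
  have hu' : 3*b*r*(2*a*H.1 - k*(3*c-4*c^3)) = 0 := by
    linear_combination (2*b*(3*s+r*c))*h0 + (4*b*r*c)*h1 +
      (9*b*r*k*c - 6*a*b*r*H.1)*hsc + (a^2*b*r*c*s^2 + b^3*r*c^3)*hr3
  have hv' : 3*a*r*(2*b*H.2 - k*(4*s^3-3*s)) = 0 := by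
    linear_combination (-2*a*(3*c-r*s))*h0 + (4*a*r*s)*h1 +
      (-6*a*b*r*H.2 - 9*a*k*r*s)*hsc + (a*b^2*r*s*c^2 + a^3*r*s^3)*hr3
  have h3br : (3*b*r) ≠ 0 := by positivity
  have h3ar : (3*a*r) ≠ 0 := by positivity
  have hu : 2*a*H.1 = k*(3*c-4*c^3) := by
    have := (mul_eq_zero.mp hu').resolve_left h3br
    linarith [sub_eq_zero.mp this]
  have hv : 2*b*H.2 = k*(4*s^3-3*s) := by
    have := (mul_eq_zero.mp hv').resolve_left h3ar
    linarith [sub_eq_zero.mp this]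
  have hH1 : H.1 = k*(3*c-4*c^3)/(2*a) := by
    field_simp; linarith [hu]
  have hH2 : H.2 = k*(4*s^3-3*s)/(2*b) := by
    field_simp; linarith [hv]
  have key : (3*c-4*c^3)^2 + (4*s^3-3*s)^2 = 1 := by
    linear_combination (16*s^4 - (16*c^2+8)*s^2 + 16*c^4 - 8*c^2 + 1) * hsc
  rw [hH1, hH2]
  have hane : a ≠ 0 := ne_of_gt ha
  have hbne : b ≠ 0 := ne_of_gt hb
  have hkne : k ≠ 0 := ne_of_gt hk
  have ht1 : (k*(3*c-4*c^3)/(2*a))^2 / (1/2*k/a)^2 = (3*c-4*c^3)^2 := by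
    field_simp
  have ht2 : (k*(4*s^3-3*s)/(2*b))^2 / (1/2*k/b)^2 = (4*s^3-3*s)^2 := by
    field_simp
  rw [ht1, ht2]
  exact key
end

section
/- For any triangle, the original triangle is the orthic triangle of its excentral triangle; equivalently, each vertex of the original triangle is the foot of an altitude of the excentral triangle. -/
open RealInnerProductSpace


private lemma excentral_aux (A B C Ja Jb Jc : EuclideanSpace ℝ (Fin 2))
    (hcol : ¬ Collinear ℝ ({A, B, C} : Set (EuclideanSpace ℝ (Fin 2))))
    (hJa : Ja = (-dist B C + dist C A + dist A B)⁻¹ •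
      ((-dist B C) • A + dist C A • B + dist A B • C))
    (hJb : Jb = (dist B C - dist C A + dist A B)⁻¹ •
      (dist B C • A + (-dist C A) • B + dist A B • C))
    (hJc : Jc = (dist B C + dist C A - dist A B)⁻¹ •
      (dist B C • A + dist C A • B + (-dist A B) • C)) :
    A ∈ affineSpan ℝ ({Jb, Jc} : Set (EuclideanSpace ℝ (Fin 2))) ∧
      ⟪A - Ja, Jc - Jb⟫ = 0 := by
  have hAB : A ≠ B := fun h => hcol ((collinear_pair ℝ B C).subset (by simp [h]))
  have hBC : B ≠ C := fun h => hcol ((collinear_pair ℝ A C).subset (by simp [h]))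
  have hCA : C ≠ A := fun h => hcol ((collinear_pair ℝ A B).subset (by
    simp [h, Set.insert_comm, Set.pair_comm]))
  set s₁ := dist B C with hs1
  set s₂ := dist C A with hs2
  set s₃ := dist A B with hs3
  have hs₁ : 0 < s₁ := dist_pos.2 hBC
  have hs₂ : 0 < s₂ := dist_pos.2 hCA
  have hs₃ : 0 < s₃ := dist_pos.2 hAB
  have hW : ∀ x y z : EuclideanSpace ℝ (Fin 2),
      ({x, y, z} : Set (EuclideanSpace ℝ (Fin 2))) = {A, B, C} →
      dist x z < dist x y + dist y z := by
    intro x y z hset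
    rcases lt_or_eq_of_le (dist_triangle x y z) with h | h
    · exact h
    · exact absurd (hset ▸ (dist_add_dist_eq_iff.1 h.symm).collinear) hcol
  have hd₁ : 0 < -s₁ + s₂ + s₃ := by
    have := hW B A C (by rw [Set.insert_comm]); rw [dist_comm B A] at this
    simp only [← hs1, ← hs2, ← hs3, dist_comm A C] at this
    linarith
  have hd₂ : 0 < s₁ - s₂ + s₃ := by
    have := hW A B C rfl
    simp only [← hs1, ← hs3, dist_comm A C] at this
    linarith
  have hd₃ : 0 < s₁ + s₂ - s₃ := by
    have := hW A C B (by rw [Set.pair_comm C B])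
    simp only [← hs2, ← hs3, dist_comm A C, dist_comm C B, ← hs1] at this
    linarith
  constructor
  · have hA : A = ((s₁ + s₂ - s₃) / (2 * s₁)) • (Jc -ᵥ Jb) +ᵥ Jb := by
      simp only [hJb, hJc, vsub_eq_sub, vadd_eq_add]
      match_scalars <;> field_simp <;> ring
    rw [hA]
    exact smul_vsub_vadd_mem_affineSpan_pair _ _ _
  · have h1 : A - Ja = (-s₁ + s₂ + s₃)⁻¹ • (s₂ • (A - B) + s₃ • (A - C)) := by
      rw [hJa]; match_scalars <;> field_simp <;> ring
    have h2 : Jc - Jb = (2 * s₁ * ((s₁ - s₂ + s₃) * (s₁ + s₂ - s₃))⁻¹) •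
        (s₃ • (A - C) - s₂ • (A - B)) := by
      rw [hJb, hJc]; match_scalars <;> field_simp <;> ring
    set u := A - B with hu
    set v := A - C with hv
    have e1 : ⟪u, u⟫ = s₃ ^ 2 := by
      rw [real_inner_self_eq_norm_sq, hs3, hu, dist_eq_norm]
    have e2 : ⟪v, v⟫ = s₂ ^ 2 := by
      rw [real_inner_self_eq_norm_sq, hs2, hv, dist_comm, dist_eq_norm]
    rw [h1, h2]
    simp only [real_inner_smul_left, real_inner_smul_right, inner_add_left,
      inner_sub_right, inner_sub_left, inner_add_right]
    rw [e1, e2, real_inner_comm v u]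
    ring

/-- A triangle is the orthic triangle of its excentral triangle: each vertex of
the original triangle is the foot of an altitude of the excentral triangle
(whose vertices are the three excenters, given in barycentric coordinates by
weights `(-s₁, s₂, s₃)`, etc., where `sᵢ` are the side lengths). -/
theorem orthic_of_excentral
    (A B C : EuclideanSpace ℝ (Fin 2))
    (hcol : ¬ Collinear ℝ ({A, B, C} : Set (EuclideanSpace ℝ (Fin 2)))) :
    let s₁ := dist B C; let s₂ := dist C A; let s₃ := dist A B
    let Ja : EuclideanSpace ℝ (Fin 2) :=
      (-s₁ + s₂ + s₃)⁻¹ • ((-s₁) • A + s₂ • B + s₃ • C)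
    let Jb : EuclideanSpace ℝ (Fin 2) :=
      (s₁ - s₂ + s₃)⁻¹ • (s₁ • A + (-s₂) • B + s₃ • C)
    let Jc : EuclideanSpace ℝ (Fin 2) :=
      (s₁ + s₂ - s₃)⁻¹ • (s₁ • A + s₂ • B + (-s₃) • C)
    (A ∈ affineSpan ℝ ({Jb, Jc} : Set (EuclideanSpace ℝ (Fin 2))) ∧
      ⟪A - Ja, Jc - Jb⟫ = 0) ∧
    (B ∈ affineSpan ℝ ({Jc, Ja} : Set (EuclideanSpace ℝ (Fin 2))) ∧
      ⟪B - Jb, Ja - Jc⟫ = 0) ∧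
    (C ∈ affineSpan ℝ ({Ja, Jb} : Set (EuclideanSpace ℝ (Fin 2))) ∧
      ⟪C - Jc, Jb - Ja⟫ = 0) := by
  intro s₁ s₂ s₃ Ja Jb Jc
  have hcolB : ¬ Collinear ℝ ({B, C, A} : Set (EuclideanSpace ℝ (Fin 2))) := by
    rwa [Set.insert_comm, Set.pair_comm] at hcol
  have hcolC : ¬ Collinear ℝ ({C, A, B} : Set (EuclideanSpace ℝ (Fin 2))) := by
    rwa [Set.insert_comm, Set.pair_comm] at hcolB
  refine ⟨excentral_aux A B C Ja Jb Jc hcol rfl rfl rfl,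
    excentral_aux B C A Jb Jc Ja hcolB ?_ ?_ ?_,
    excentral_aux C A B Jc Ja Jb hcolC ?_ ?_ ?_⟩ <;>
  · simp only [Jb, Jc, Ja, s₁, s₂, s₃]
    match_scalars <;> ring
end
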